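/- arXiv:1808.01511 — 2 statements merged into one kernel-verified Lean document; each statement's English description precedes it below -/
import Mathlib

section
/- Let A be a unital C*-algebra and X ⊆ A a nonempty irredundant subset. Then there exists x₀ ∈ X such that for every x ∈ X \ {x₀}, x does not belong to the unital C*-subalgebra of A generated by X \ {x₀, x}. -/
/-- A subset `X` of a C*-algebra is irredundant if no element of `X` belongs to the closed
(non-unital) *-subalgebra generated by the remaining elements. -/
def Irredundant {A : Type*} [CStarAlgebra A] (X : Set A) : Prop :=
  ∀ a ∈ X, a ∉ closure (NonUnitalStarAlgebra.adjoin ℂ (X \ {a}) : Set A)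

open Submodule in
/-- Every element of the closed unital star subalgebra generated by `s` is, modulo a scalar
multiple of the unit, in the closed non-unital star subalgebra generated by `s`. -/
lemma exists_smul_one_sub_mem {A : Type*} [CStarAlgebra A] (s : Set A) {x : A}
    (hx : x ∈ closure (StarAlgebra.adjoin ℂ s : Set A)) :
    ∃ c : ℂ, x - c • 1 ∈ closure (NonUnitalStarAlgebra.adjoin ℂ s : Set A) := by
  set N : Submodule ℂ A :=
    ((NonUnitalStarAlgebra.adjoin ℂ s).toSubmodule).topologicalClosure with hN
  haveI hNc : IsClosed (N : Set A) := Submodule.isClosed_topologicalClosure _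
  set K : Submodule ℂ (A ⧸ N) := span ℂ {Submodule.Quotient.mk (1 : A)} with hK
  have hKc : IsClosed (K : Set (A ⧸ N)) := Submodule.closed_of_finiteDimensional K
  have hcont : Continuous (N.mkQ) := continuous_quot_mk
  have hle : span ℂ ({1} : Set A) ⊔ (NonUnitalStarAlgebra.adjoin ℂ s).toSubmodule
      ≤ K.comap N.mkQ := by
    refine sup_le ?_ ?_
    · rw [span_le]
      rintro z rfl
      exact subset_span rfl
    · refine le_trans (le_topologicalClosure _) ?_
      intro n hn
      simp only [mem_comap, mkQ_apply]
      rw [(Submodule.Quotient.mk_eq_zero N).2 hn]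
      exact zero_mem _
  have hsub : (StarAlgebra.adjoin ℂ s : Set A) ⊆ N.mkQ ⁻¹' K := by
    intro z hz
    have hz' : z ∈ span ℂ ({1} : Set A) ⊔ (NonUnitalStarAlgebra.adjoin ℂ s).toSubmodule := by
      have h2 := StarAlgebra.adjoin_nonUnitalStarSubalgebra_eq_span
        (R := ℂ) (NonUnitalStarAlgebra.adjoin ℂ s)
      rw [StarAlgebra.adjoin_nonUnitalStarSubalgebra] at h2
      have : z ∈ Subalgebra.toSubmodule (StarAlgebra.adjoin ℂ s).toSubalgebra := hz
      rwa [h2] at this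
    exact hle hz'
  have hxK : x ∈ N.mkQ ⁻¹' K :=
    closure_minimal hsub (hKc.preimage hcont) hx
  rw [Set.mem_preimage, SetLike.mem_coe, hK, mem_span_singleton] at hxK
  obtain ⟨c, hc⟩ := hxK
  refine ⟨c, ?_⟩
  have hmem : x - c • 1 ∈ N := by
    rw [← Submodule.Quotient.mk_eq_zero N]
    have : Submodule.Quotient.mk (x - c • (1:A)) = N.mkQ x - c • Submodule.Quotient.mk (1:A) := by
      simp [Submodule.Quotient.mk_sub, Submodule.Quotient.mk_smul]
    rw [this, ← hc, sub_self]
  have : (N : Set A) = closure (NonUnitalStarAlgebra.adjoin ℂ s : Set A) := by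
    rw [hN, Submodule.topologicalClosure_coe]
    rfl
  rw [← this]
  exact hmem

lemma nu_adjoin_mono {A : Type*} [CStarAlgebra A] {s t : Set A} (h : s ⊆ t) :
    (NonUnitalStarAlgebra.adjoin ℂ s : Set A) ⊆ (NonUnitalStarAlgebra.adjoin ℂ t : Set A) :=
  SetLike.coe_subset_coe.2 <|
    NonUnitalStarAlgebra.adjoin_le (h.trans (NonUnitalStarAlgebra.subset_adjoin ℂ _))

/-- Let `A` be a unital C*-algebra and `X ⊆ A` a nonempty irredundant subset.  Then there is an
`x₀ ∈ X` such that no `x ∈ X \ {x₀}` belongs to the unital C*-subalgebra of `A` generated by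
`X \ {x₀, x}` (i.e. the closed star subalgebra generated by `X \ {x₀, x}` together with `1`). -/
theorem exists_strongly_irredundant_point
    {A : Type*} [CStarAlgebra A] (X : Set A) (hX : X.Nonempty) (hirr : Irredundant X) :
    ∃ x₀ ∈ X, ∀ x ∈ X \ {x₀},
      x ∉ closure (StarAlgebra.adjoin ℂ (X \ {x₀, x}) : Set A) := by
  by_contra hcon
  push_neg at hcon
  have one_mem : ∀ a ∈ X, (1 : A) ∈ closure (NonUnitalStarAlgebra.adjoin ℂ (X \ {a}) : Set A) := by
    intro a ha
    obtain ⟨x, ⟨hxX, hxa⟩, hmem⟩ := hcon a ha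
    obtain ⟨c, hc⟩ := exists_smul_one_sub_mem _ hmem
    by_cases hc0 : c = 0
    · exfalso
      apply hirr x hxX
      refine closure_mono (nu_adjoin_mono ?_) (by simpa [hc0] using hc)
      intro z hz
      exact ⟨hz.1, fun h => hz.2 (Or.inr h)⟩
    · set T := (NonUnitalStarAlgebra.adjoin ℂ (X \ {a})).topologicalClosure with hT
      have hxT : x ∈ T :=
        subset_closure (NonUnitalStarAlgebra.subset_adjoin ℂ _ ⟨hxX, hxa⟩)
      have hyT : x - c • 1 ∈ T := by
        refine closure_mono (nu_adjoin_mono ?_) hc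
        intro z hz
        exact ⟨hz.1, fun h => hz.2 (Or.inl h)⟩
      have h1T : (1 : A) ∈ T := by
        have he : (1 : A) = c⁻¹ • (x - (x - c • 1)) := by
          rw [sub_sub_cancel, smul_smul, inv_mul_cancel₀ hc0, one_smul]
        rw [he]
        exact SMulMemClass.smul_mem _ (sub_mem hxT hyT)
      exact h1T
  obtain ⟨a, ha⟩ := hX
  obtain ⟨x, ⟨hxX, hxa⟩, hmem⟩ := hcon a ha
  set T := (NonUnitalStarAlgebra.adjoin ℂ (X \ {x})).topologicalClosure with hT
  have h1T : (1 : A) ∈ T := one_mem x hxX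
  set S := T.toStarSubalgebra h1T with hS
  have hadj : StarAlgebra.adjoin ℂ (X \ {a, x}) ≤ S := by
    rw [StarAlgebra.adjoin_le_iff]
    intro z hz
    exact subset_closure
      (NonUnitalStarAlgebra.subset_adjoin ℂ _ ⟨hz.1, fun h => hz.2 (Or.inr h)⟩)
  have hclosed : IsClosed (S : Set A) :=
    NonUnitalStarSubalgebra.isClosed_topologicalClosure _
  have hxS : x ∈ (S : Set A) :=
    closure_minimal (SetLike.coe_subset_coe.2 hadj) hclosed hmem
  exact hirr x hxX hxS
end

section
/- Let A be a unital C*-algebra, B a Boolean algebra of projections in A (closed under meet pq = pq when commuting, join, and complement 1−p), and X ⊆ B a Boolean-irredundant subset. Then X is irredundant in A as a C*-algebra. -/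
/-- The Boolean subalgebra generated by a set `S` of (pairwise commuting) projections in a
unital ring: the smallest subset containing `S`, containing `0` and `1`, and closed under the
Boolean operations `p ∧ q = pq`, `p ∨ q = p + q − pq` and `¬p = 1 − p`. -/
def BoolGen {A : Type*} [Ring A] (S : Set A) : Set A :=
  ⋂₀ {T : Set A | S ⊆ T ∧ (0 : A) ∈ T ∧ (1 : A) ∈ T ∧
      (∀ p ∈ T, ∀ q ∈ T, p * q ∈ T ∧ p + q - p * q ∈ T) ∧ (∀ p ∈ T, 1 - p ∈ T)}

/-- A nonzero projection in a C*-algebra has norm one; in general norm at most one. -/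
lemma proj_norm_le_one {A : Type*} [CStarAlgebra A] {p : A}
    (hs : star p = p) (hp : p * p = p) : ‖p‖ ≤ 1 := by
  have h := CStarRing.norm_star_mul_self (x := p)
  rw [hs, hp] at h
  rcases eq_or_ne ‖p‖ 0 with h0 | h0
  · rw [h0]; norm_num
  · nlinarith [norm_nonneg p]

lemma proj_norm_eq_one {A : Type*} [CStarAlgebra A] {p : A}
    (hs : star p = p) (hp : p * p = p) (h0 : p ≠ 0) : ‖p‖ = 1 := by
  have h := CStarRing.norm_star_mul_self (x := p)
  rw [hs, hp] at h
  have hne : ‖p‖ ≠ 0 := fun h' => h0 (norm_eq_zero.mp h')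
  have h' : ‖p‖ * 1 = ‖p‖ * ‖p‖ := by rw [mul_one, ← h]
  exact (mul_left_cancel₀ hne h').symm

/-- Dichotomy: if a projection `q` dominated by the projection `e` is within `1/2` of a scalar
multiple of `e`, then `q = 0` or `q = e`. -/
lemma proj_dichotomy {A : Type*} [CStarAlgebra A] {e q : A}
    (hes : star e = e) (hee : e * e = e)
    (hqs : star q = q) (hqq : q * q = q)
    (hqe : q * e = q) (heq : e * q = q)
    (lam : ℂ) (h : ‖q - lam • e‖ < 1/2) : q = 0 ∨ q = e := by
  by_contra hcon
  push_neg at hcon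
  obtain ⟨hq0, hqne⟩ := hcon
  have hnq : ‖q‖ = 1 := proj_norm_eq_one hqs hqq hq0
  have hrs : star (e - q) = e - q := by rw [star_sub, hes, hqs]
  have hrr : (e - q) * (e - q) = e - q := by
    rw [sub_mul, mul_sub, mul_sub, hee, hqq, heq, hqe]; abel
  have hr0 : e - q ≠ 0 := sub_ne_zero.mpr (Ne.symm hqne)
  have hnr : ‖e - q‖ = 1 := proj_norm_eq_one hrs hrr hr0
  have key1 : (q - lam • e) * q = (1 - lam) • q := by
    rw [sub_mul, smul_mul_assoc, heq, hqq, sub_smul, one_smul]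
  have key2 : (q - lam • e) * (e - q) = (-lam) • (e - q) := by
    rw [sub_mul, smul_mul_assoc, mul_sub, mul_sub, hqe, hqq, hee, heq]
    module
  have b1 : ‖(1 : ℂ) - lam‖ < 1/2 := by
    have := norm_mul_le (q - lam • e) q
    rw [key1, norm_smul, hnq, mul_one, mul_one] at this
    linarith
  have b2 : ‖lam‖ < 1/2 := by
    have := norm_mul_le (q - lam • e) (e - q)
    rw [key2, norm_smul, hnr, mul_one, mul_one, norm_neg] at this
    linarith
  have : (1 : ℝ) ≤ ‖(1 : ℂ) - lam‖ + ‖lam‖ := by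
    have := norm_add_le ((1 : ℂ) - lam) lam
    simpa using this
  linarith

/-- Key inductive lemma: if `x` is a projection commuting with a Boolean-closed set `G` of
projections, `e ∈ G`, and `x * e` is within `1/2` of a linear combination of `e` and terms
`p * e` with `p ∈ G`, then `x * e ∈ G`. -/
lemma key_lemma {A : Type*} [CStarAlgebra A] (G : Set A) (x : A)
    (hGproj : ∀ p ∈ G, star p = p ∧ p * p = p)
    (hGx : ∀ p ∈ G, x * p = p * x)
    (hGc : ∀ p ∈ G, ∀ q ∈ G, p * q = q * p)
    (hxs : star x = x) (hxx : x * x = x)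
    (h0 : (0 : A) ∈ G) (h1 : (1 : A) ∈ G)
    (hmul : ∀ p ∈ G, ∀ q ∈ G, p * q ∈ G)
    (hjoin : ∀ p ∈ G, ∀ q ∈ G, p + q - p * q ∈ G)
    (hcompl : ∀ p ∈ G, 1 - p ∈ G) :
    ∀ t : Finset A, ↑t ⊆ G → ∀ c : A → ℂ, ∀ e ∈ G, ∀ lam : ℂ,
      ‖x * e - lam • e - ∑ p ∈ t, c p • (p * e)‖ < 1/2 → x * e ∈ G := by
  classical
  intro t
  induction t using Finset.induction_on with
  | empty =>
      intro _ c e he lam h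
      rw [Finset.sum_empty, sub_zero] at h
      obtain ⟨hes, hee⟩ := hGproj e he
      have hxe : x * e = e * x := hGx e he
      have hqs : star (x * e) = x * e := by rw [star_mul, hes, hxs, ← hxe]
      have hqq : (x * e) * (x * e) = x * e := by
        rw [mul_assoc, ← mul_assoc e x, ← hxe, mul_assoc, hee, ← mul_assoc, hxx]
      have hqe : (x * e) * e = x * e := by rw [mul_assoc, hee]
      have heq : e * (x * e) = x * e := by rw [← mul_assoc, ← hxe, mul_assoc, hee]
      rcases proj_dichotomy hes hee hqs hqq hqe heq lam h with h' | h'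
      · rw [h']; exact h0
      · rw [h']; exact he
  | @insert p₀ s hp₀s ih =>
      intro hts c e he lam h
      have hp₀G : p₀ ∈ G := hts (Finset.mem_insert_self _ _)
      have hsG : ↑s ⊆ G := fun a ha => hts (Finset.mem_insert_of_mem ha)
      obtain ⟨hp₀st, hp₀p₀⟩ := hGproj p₀ hp₀G
      obtain ⟨hes, hee⟩ := hGproj e he
      have hq₀G : (1 : A) - p₀ ∈ G := hcompl p₀ hp₀G
      have hnp₀ : ‖p₀‖ ≤ 1 := proj_norm_le_one hp₀st hp₀p₀
      have hnq₀ : ‖(1 : A) - p₀‖ ≤ 1 :=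
        proj_norm_le_one (hGproj _ hq₀G).1 (hGproj _ hq₀G).2
      rw [Finset.sum_insert hp₀s] at h
      set D := x * e - lam • e - (c p₀ • (p₀ * e) + ∑ p ∈ s, c p • (p * e)) with hD
      -- part on e₁ = p₀ * e
      have he₁G : p₀ * e ∈ G := hmul p₀ hp₀G e he
      have k1 : e * p₀ = p₀ * e := hGc e he p₀ hp₀G
      have claim1 : D * p₀ =
          x * (p₀ * e) - (lam + c p₀) • (p₀ * e) - ∑ p ∈ s, c p • (p * (p₀ * e)) := by
        rw [hD, sub_mul, sub_mul, add_mul, smul_mul_assoc, smul_mul_assoc,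
          Finset.sum_mul]
        have e1 : (x * e) * p₀ = x * (p₀ * e) := by rw [mul_assoc, k1]
        have e2 : (e : A) * p₀ = p₀ * e := k1
        have e3 : ((p₀ * e) * p₀ : A) = p₀ * e := by
          rw [mul_assoc, k1, ← mul_assoc, hp₀p₀]
        have e4 : ∀ p ∈ s, (c p • (p * e)) * p₀ = c p • (p * (p₀ * e)) := by
          intro p hp
          rw [smul_mul_assoc, mul_assoc, k1]
        rw [e1, e2, e3, Finset.sum_congr rfl e4, add_smul]
        abel
      have hb1 : ‖D * p₀‖ < 1/2 := by
        calc ‖D * p₀‖ ≤ ‖D‖ * ‖p₀‖ := norm_mul_le _ _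
          _ ≤ ‖D‖ * 1 := by
              have : (0:ℝ) ≤ ‖D‖ := norm_nonneg _
              nlinarith
          _ < 1/2 := by rw [mul_one]; exact h
      rw [claim1] at hb1
      have hx1 : x * (p₀ * e) ∈ G := ih hsG c (p₀ * e) he₁G (lam + c p₀) hb1
      -- part on e₂ = (1 - p₀) * e
      have he₂G : (1 - p₀) * e ∈ G := hmul _ hq₀G e he
      have k1' : e * (1 - p₀) = (1 - p₀) * e := hGc e he _ hq₀G
      have hp₀z : p₀ * (1 - p₀) = 0 := by
        rw [mul_sub, mul_one, hp₀p₀, sub_self]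
      have claim2 : D * (1 - p₀) =
          x * ((1 - p₀) * e) - lam • ((1 - p₀) * e)
            - ∑ p ∈ s, c p • (p * ((1 - p₀) * e)) := by
        rw [hD, sub_mul, sub_mul, add_mul, smul_mul_assoc, smul_mul_assoc,
          Finset.sum_mul]
        have e1 : (x * e) * (1 - p₀) = x * ((1 - p₀) * e) := by rw [mul_assoc, k1']
        have e2 : (e : A) * (1 - p₀) = (1 - p₀) * e := k1'
        have e3 : ((p₀ * e) * (1 - p₀) : A) = 0 := by
          rw [mul_assoc, k1', ← mul_assoc, hp₀z, zero_mul]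
        have e4 : ∀ p ∈ s, (c p • (p * e)) * (1 - p₀) = c p • (p * ((1 - p₀) * e)) := by
          intro p hp
          rw [smul_mul_assoc, mul_assoc, k1']
        rw [e1, e2, e3, Finset.sum_congr rfl e4, smul_zero]
        abel
      have hb2 : ‖D * (1 - p₀)‖ < 1/2 := by
        calc ‖D * (1 - p₀)‖ ≤ ‖D‖ * ‖(1 : A) - p₀‖ := norm_mul_le _ _
          _ ≤ ‖D‖ * 1 := by
              have : (0:ℝ) ≤ ‖D‖ := norm_nonneg _
              nlinarith
          _ < 1/2 := by rw [mul_one]; exact h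
      rw [claim2] at hb2
      have hx2 : x * ((1 - p₀) * e) ∈ G := ih hsG c _ he₂G lam hb2
      -- combine
      have horth : (x * (p₀ * e)) * (x * ((1 - p₀) * e)) = 0 := by
        have h12 : (p₀ * e) * ((1 - p₀) * e) = 0 := by
          rw [mul_assoc, ← mul_assoc e, k1', mul_assoc, ← mul_assoc, hp₀z, zero_mul]
        have hc : (p₀ * e) * x = x * (p₀ * e) := (hGx _ he₁G).symm
        calc (x * (p₀ * e)) * (x * ((1 - p₀) * e))
            = x * (((p₀ * e) * x) * ((1 - p₀) * e)) := by
              rw [mul_assoc, ← mul_assoc (p₀ * e)]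
          _ = x * ((x * (p₀ * e)) * ((1 - p₀) * e)) := by rw [hc]
          _ = (x * x) * ((p₀ * e) * ((1 - p₀) * e)) := by
              rw [mul_assoc x (p₀ * e), ← mul_assoc x x]
          _ = 0 := by rw [h12, mul_zero]
      have hsum : x * e = x * (p₀ * e) + x * ((1 - p₀) * e)
          - (x * (p₀ * e)) * (x * ((1 - p₀) * e)) := by
        rw [horth, sub_zero, ← mul_add]
        congr 1
        rw [sub_mul, one_mul]
        abel
      rw [hsum]
      exact hjoin _ hx1 _ hx2

/-- Let `A` be a unital C*-algebra and `B` a Boolean algebra of projections in `A` (a set of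
pairwise commuting projections containing `0` and `1` and closed under meet `pq`, join
`p + q − pq` and complement `1 − p`).  If `X ⊆ B` is Boolean-irredundant (no `x ∈ X` belongs to
the Boolean subalgebra generated by `X \ {x}`), then `X` is irredundant in `A` as a
C*-algebra. -/
theorem irredundant_of_booleanIrredundant
    {A : Type*} [CStarAlgebra A] (B : Set A)
    (hproj : ∀ p ∈ B, star p = p ∧ p * p = p)
    (hcomm : ∀ p ∈ B, ∀ q ∈ B, p * q = q * p)
    (h0 : (0 : A) ∈ B) (h1 : (1 : A) ∈ B)
    (hmeet : ∀ p ∈ B, ∀ q ∈ B, p * q ∈ B)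
    (hjoin : ∀ p ∈ B, ∀ q ∈ B, p + q - p * q ∈ B)
    (hcompl : ∀ p ∈ B, 1 - p ∈ B)
    (X : Set A) (hXB : X ⊆ B)
    (hbool : ∀ x ∈ X, x ∉ BoolGen (X \ {x})) :
    Irredundant X := by
  intro x hx hcl
  have hxB : x ∈ B := hXB hx
  obtain ⟨hxs, hxx⟩ := hproj x hxB
  set G : Set A := BoolGen (X \ {x}) with hGdef
  -- B belongs to the defining family, so G ⊆ B
  have hBfam : B ∈ {T : Set A | (X \ {x}) ⊆ T ∧ (0 : A) ∈ T ∧ (1 : A) ∈ T ∧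
      (∀ p ∈ T, ∀ q ∈ T, p * q ∈ T ∧ p + q - p * q ∈ T) ∧ (∀ p ∈ T, 1 - p ∈ T)} := by
    refine ⟨fun a ha => hXB ha.1, h0, h1, fun p hp q hq => ⟨hmeet p hp q hq, hjoin p hp q hq⟩,
      hcompl⟩
  have hGB : G ⊆ B := Set.sInter_subset_of_mem hBfam
  have hmemG : ∀ a, a ∈ G ↔ ∀ T ∈ {T : Set A | (X \ {x}) ⊆ T ∧ (0 : A) ∈ T ∧ (1 : A) ∈ T ∧
      (∀ p ∈ T, ∀ q ∈ T, p * q ∈ T ∧ p + q - p * q ∈ T) ∧ (∀ p ∈ T, 1 - p ∈ T)}, a ∈ T :=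
    fun a => Set.mem_sInter
  have hG0 : (0 : A) ∈ G := (hmemG 0).mpr fun T hT => hT.2.1
  have hG1 : (1 : A) ∈ G := (hmemG 1).mpr fun T hT => hT.2.2.1
  have hGS : X \ {x} ⊆ G := fun a ha => (hmemG a).mpr fun T hT => hT.1 ha
  have hGmul : ∀ p ∈ G, ∀ q ∈ G, p * q ∈ G := fun p hp q hq =>
    (hmemG _).mpr fun T hT => (hT.2.2.2.1 p ((hmemG p).mp hp T hT) q ((hmemG q).mp hq T hT)).1
  have hGjoin : ∀ p ∈ G, ∀ q ∈ G, p + q - p * q ∈ G := fun p hp q hq =>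
    (hmemG _).mpr fun T hT => (hT.2.2.2.1 p ((hmemG p).mp hp T hT) q ((hmemG q).mp hq T hT)).2
  have hGcompl : ∀ p ∈ G, 1 - p ∈ G := fun p hp =>
    (hmemG _).mpr fun T hT => hT.2.2.2.2 p ((hmemG p).mp hp T hT)
  have hGproj : ∀ p ∈ G, star p = p ∧ p * p = p := fun p hp => hproj p (hGB hp)
  have hGx : ∀ p ∈ G, x * p = p * x := fun p hp => hcomm x hxB p (hGB hp)
  have hGc : ∀ p ∈ G, ∀ q ∈ G, p * q = q * p := fun p hp q hq =>
    hcomm p (hGB hp) q (hGB hq)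
  -- take y in the star algebra within 1/2 of x
  rw [Metric.mem_closure_iff] at hcl
  -- elements of the star algebra lie in the linear span of G
  have hspan_star : ∀ a ∈ Submodule.span ℂ G, star a ∈ Submodule.span ℂ G := by
    intro a ha
    induction ha using Submodule.span_induction with
    | mem a ha => rw [(hGproj a ha).1]; exact Submodule.subset_span ha
    | zero => rw [star_zero]; exact zero_mem _
    | add a b _ _ ha hb => rw [star_add]; exact add_mem ha hb
    | smul r a _ ha => rw [star_smul]; exact Submodule.smul_mem _ _ ha
  have hspan_mul : ∀ a ∈ Submodule.span ℂ G, ∀ b ∈ Submodule.span ℂ G,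
      a * b ∈ Submodule.span ℂ G := by
    intro a ha
    induction ha using Submodule.span_induction with
    | mem a ha =>
        intro b hb
        induction hb using Submodule.span_induction with
        | mem b hb => exact Submodule.subset_span (hGmul a ha b hb)
        | zero => rw [mul_zero]; exact zero_mem _
        | add b c _ _ hb hc => rw [mul_add]; exact add_mem hb hc
        | smul r b _ hb => rw [mul_smul_comm]; exact Submodule.smul_mem _ _ hb
    | zero => intro b hb; rw [zero_mul]; exact zero_mem _
    | add a c _ _ ha hc => intro b hb; rw [add_mul]; exact add_mem (ha b hb) (hc b hb)
    | smul r a _ ha => intro b hb; rw [smul_mul_assoc]; exact Submodule.smul_mem _ _ (ha b hb)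
  have hadj : ∀ z ∈ NonUnitalStarAlgebra.adjoin ℂ (X \ {x}), z ∈ Submodule.span ℂ G := by
    intro z hz
    induction hz using NonUnitalStarAlgebra.adjoin_induction with
    | mem a ha => exact Submodule.subset_span (hGS ha)
    | add a b _ _ ha hb => exact add_mem ha hb
    | zero => exact zero_mem _
    | mul a b _ _ ha hb => exact hspan_mul a ha b hb
    | smul r a _ ha => exact Submodule.smul_mem _ _ ha
    | star a _ ha => exact hspan_star a ha
  obtain ⟨y, hy, hdy⟩ := hcl (1/2) (by norm_num)
  rw [dist_eq_norm] at hdy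
  have hyspan : y ∈ Submodule.span ℂ G := hadj y hy
  obtain ⟨cf, hsupp, hsum⟩ := Submodule.mem_span_set.mp hyspan
  have hxG : x ∈ G := by
    have hb : ‖x * 1 - (0 : ℂ) • (1 : A) - ∑ p ∈ cf.support, cf p • (p * 1)‖ < 1/2 := by
      have : ∑ p ∈ cf.support, cf p • (p * (1 : A)) = y := by
        rw [← hsum, Finsupp.sum]
        exact Finset.sum_congr rfl fun p _ => by rw [mul_one]
      rw [this, mul_one, zero_smul, sub_zero]
      exact hdy
    have := key_lemma G x hGproj hGx hGc hxs hxx hG0 hG1 hGmul hGjoin hGcompl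
      cf.support hsupp (fun p => cf p) 1 hG1 0 hb
    rwa [mul_one] at this
  exact hbool x hx hxG
end
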